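/- arXiv:2206.06819 — 2 statements merged into one kernel-verified Lean document; each statement's English description precedes it below -/
import Mathlib

section
/- Let A be a Noetherian commutative ring, I an ideal of A, and J, K ideals of A contained in I such that K ⊆ I² and I = J + K. Then there exists e ∈ K such that e(1 - e) ∈ J and I = J + (e). -/
/-!
Modulo `J` the hypotheses make the image of `K` an idempotent ideal: `K ⊆ I² = (J + K)² ⊆ J + K²`.
A finitely generated idempotent ideal is generated by an idempotent, and any lift `e ∈ K` of
that idempotent works.
-/

namespace Ideal

variable {A : Type*} [CommRing A]

theorem sup_sq_le_sup_sq (J K : Ideal A) : (J ⊔ K) ^ 2 ≤ J ⊔ K ^ 2 := by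
  rw [sq, sq, sup_mul, mul_sup, mul_sup]
  exact sup_le (sup_le (mul_le_left.trans le_sup_left) (mul_le_left.trans le_sup_left))
    (sup_le (mul_le_right.trans le_sup_left) le_sup_right)

theorem comap_mk_map_mk (J K : Ideal A) :
    comap (Quotient.mk J) (map (Quotient.mk J) K) = J ⊔ K := by
  rw [comap_map_of_surjective _ Quotient.mk_surjective, ← RingHom.ker_eq_comap_bot, mk_ker, sup_comm]

theorem isIdempotentElem_map_mk_of_le_sup_sq {J K : Ideal A} (h : K ≤ J ⊔ K ^ 2) :
    IsIdempotentElem (K.map (Quotient.mk J)) := by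
  refine le_antisymm mul_le_right ?_
  simpa only [map_sup, map_quotient_self, bot_sup_eq, sq, Ideal.map_mul] using
    map_mono (f := Quotient.mk J) h

theorem exists_mem_mul_one_sub_mem_and_sup_eq_sup_span [IsNoetherianRing A] {J K : Ideal A}
    (h : K ≤ J ⊔ K ^ 2) : ∃ e ∈ K, e * (1 - e) ∈ J ∧ J ⊔ K = J ⊔ span {e} := by
  obtain ⟨ε, hε, hKε⟩ := (isIdempotentElem_iff_of_fg _ (IsNoetherian.noetherian _)).mp
    (isIdempotentElem_map_mk_of_le_sup_sq h)
  obtain ⟨e, heK, rfl⟩ := (mem_map_iff_of_surjective _ Quotient.mk_surjective).mp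
    (hKε ▸ mem_span_singleton_self ε : ε ∈ K.map (Quotient.mk J))
  refine ⟨e, heK, Quotient.eq_zero_iff_mem.mp ?_, ?_⟩
  · rw [map_mul, map_sub, map_one, mul_sub, mul_one, hε.eq, sub_self]
  · rw [← comap_mk_map_mk, ← comap_mk_map_mk, hKε, map_span, Set.image_singleton]

end Ideal

theorem mohan_kumar_lemma_general {A : Type*} [CommRing A] [IsNoetherianRing A]
    (I J K : Ideal A) (hKI2 : K ≤ I ^ 2) (hJK : I = J ⊔ K) :
    ∃ e ∈ K, e * (1 - e) ∈ J ∧ I = J ⊔ Ideal.span {e} := by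
  subst hJK
  exact Ideal.exists_mem_mul_one_sub_mem_and_sup_eq_sup_span
    (hKI2.trans (Ideal.sup_sq_le_sup_sq J K))

/-- N. Mohan Kumar's lemma: if `I = J + K` with `K ⊆ I²`, then there is `e ∈ K`
with `e(1-e) ∈ J` and `I = J + (e)`. -/
theorem mohan_kumar_lemma {A : Type*} [CommRing A] [IsNoetherianRing A]
    (I J K : Ideal A) (hJ : J ≤ I) (hK : K ≤ I) (hKI2 : K ≤ I ^ 2)
    (hJK : I = J ⊔ K) :
    ∃ e ∈ K, e * (1 - e) ∈ J ∧ I = J ⊔ Ideal.span {e} :=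
  mohan_kumar_lemma_general I J K hKI2 hJK
end

section
/- Let A be a commutative Noetherian ring and J ⊆ A an ideal of height n. Let f ∈ A be nonzero such that the localization J_f is a proper ideal of A_f and J_f is generated by elements a₁,…,aₙ ∈ J. Then there exists σ ∈ SL_n(A_f) such that (a₁,…,aₙ)σ = (b₁,…,bₙ) where each bᵢ ∈ J ⊆ A and the ideal of A generated by b₁,…,bₙ has height n. -/
/-!
Write `φ : A → A_f`. Starting from `b = a`, treat the entries one at a time, keeping `φ ∘ b` in
the `SL`-orbit of `φ ∘ a` and `b` inside `J`. Once `span (b '' s)` has height at least `#s`,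
pick `k ∉ s` and replace `b k` by `b k + d`, where `d ∈ J` and `φ d` lies in the ideal `S`
spanned by the other entries of `φ ∘ b`: an elementary `SL` move over `A_f`. Davis' form of prime
avoidance chooses `d` so that `b k + d` avoids the minimal primes of height `#s` over
`span (b '' s)`, which raises the height by one. Its hypothesis, that no such prime `q ∋ b k`
contains `J ∩ φ⁻¹ S`, holds because `q ⊉ J` by height, so `q ⊇ φ⁻¹ S`; then `q` is minimal over
an ideal contracted from `A_f`, hence contracted from a prime containing `S` and `φ (b k)`, hence
`J_f`, which would force `J ≤ q`.
-/

noncomputable def idealHeight {R : Type*} [CommRing R] (I : Ideal R) : ℕ∞ :=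
  ⨅ (p : PrimeSpectrum R) (_ : I ≤ p.asIdeal), Order.height p

open Ideal Matrix Set

section

variable {A : Type*} [CommRing A]

theorem Ideal.le_height_iff {I : Ideal A} {m : ℕ∞} :
    m ≤ I.height ↔ ∀ p : Ideal A, p.IsPrime → I ≤ p → m ≤ p.height := by
  refine ⟨fun h p _ hIp => h.trans (height_mono hIp), fun h => ?_⟩
  rw [height_eq_inf_minimalPrimes]
  exact le_iInf₂ fun q hq => h q hq.isPrime hq.le

theorem Ideal.mem_minimalPrimes_of_le_of_le {I C q : Ideal A} (hq : q ∈ I.minimalPrimes)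
    (hIC : I ≤ C) (hCq : C ≤ q) : q ∈ C.minimalPrimes :=
  ⟨⟨hq.isPrime, hCq⟩, fun _ hp hpq => hq.2 ⟨hp.1, hIC.trans hp.2⟩ hpq⟩

theorem idealHeight_eq_height (I : Ideal A) : idealHeight I = I.height := by
  refine le_antisymm ?_ (le_iInf₂ fun p hIp => ?_)
  · rw [height_eq_inf_minimalPrimes]
    refine le_iInf₂ fun q hq => ?_
    let p : PrimeSpectrum A := ⟨q, hq.isPrime⟩
    rw [show q.height = Order.height p from p.height_eq_orderHeight]
    exact iInf₂_le p hq.le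
  · rw [← PrimeSpectrum.height_eq_orderHeight]
    exact height_mono hIp

theorem Ideal.exists_add_notMem_of_isAntichain {T : Finset (Ideal A)}
    (hT : ∀ q ∈ T, q.IsPrime) (hanti : IsAntichain (· ≤ ·) (T : Set (Ideal A)))
    {x : A} {D : Ideal A} (h : ∀ q ∈ T, x ∈ q → ¬ D ≤ q) :
    ∃ d ∈ D, ∀ q ∈ T, x + d ∉ q := by
  classical
  set T₀ := T.filter (x ∉ ·)
  set T₁ := T.filter (x ∈ ·)
  -- `d` is taken in every `q ∌ x` and in no `q ∋ x`; by incomparability no `q ∋ x` contains a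
  -- `q' ∌ x`, so prime avoidance applies.
  have hnot : ¬ ((D ⊓ T₀.inf id : Ideal A) : Set A) ⊆
      ⋃ q ∈ (T₁ : Set (Ideal A)), (q : Set A) := by
    rw [subset_union_prime ⊥ ⊥ fun q hq _ _ => hT q (Finset.mem_of_mem_filter q hq)]
    rintro ⟨q, hq, hle⟩
    obtain ⟨hqT, hxq⟩ := Finset.mem_filter.mp hq
    rcases ((hT q hqT).inf_le).mp hle with hD | hinf
    · exact h q hqT hxq hD
    · obtain ⟨q', hq', hq'q⟩ := ((hT q hqT).inf_le').mp hinf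
      obtain ⟨hq'T, hxq'⟩ := Finset.mem_filter.mp hq'
      exact hxq' (hanti.eq hq'T hqT hq'q ▸ hxq)
  obtain ⟨d, ⟨hdD, hdT₀⟩, hdT₁⟩ := Set.not_subset.mp hnot
  simp only [Set.mem_iUnion, SetLike.mem_coe, not_exists] at hdT₁
  refine ⟨d, hdD, fun q hq hxdq => ?_⟩
  by_cases hxq : x ∈ q
  · exact hdT₁ q (by simpa [T₁] using ⟨hq, hxq⟩) (by simpa using q.sub_mem hxdq hxq)
  · have hT₀q : T₀.inf id ≤ q := Finset.inf_le (by simpa [T₀] using ⟨hq, hxq⟩)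
    have hdq : d ∈ q := hT₀q hdT₀
    exact hxq (by simpa using q.sub_mem hxdq hdq)

theorem Ideal.exists_mem_le_height_sup_span_add [IsNoetherianRing A] {I D : Ideal A} {x : A}
    {i : ℕ} (hI : i ≤ I.height)
    (h : ∀ q ∈ I.minimalPrimes, q.height ≤ i → x ∈ q → ¬ D ≤ q) :
    ∃ d ∈ D, (i + 1 : ℕ∞) ≤ (I ⊔ span {x + d}).height := by
  have hfin := (I.finite_minimalPrimes_of_isNoetherianRing A).subset
    (sep_subset I.minimalPrimes fun q => q.height ≤ i)
  obtain ⟨d, hdD, hd⟩ := exists_add_notMem_of_isAntichain (T := hfin.toFinset)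
    (fun q hq => (hfin.mem_toFinset.mp hq).1.isPrime)
    (by rw [hfin.coe_toFinset]; exact (setOfPred_minimal_antichain _).subset (sep_subset _ _))
    (fun q hq => h q (hfin.mem_toFinset.mp hq).1 (hfin.mem_toFinset.mp hq).2)
  refine ⟨d, hdD, le_height_iff.mpr fun p _ hp => ?_⟩
  obtain ⟨q, hq, hqp⟩ := exists_minimalPrimes_le (le_sup_left.trans hp)
  have := hq.isPrime
  by_cases hqi : q.height ≤ i
  · have hxd : x + d ∈ p := hp (mem_sup_right (mem_span_singleton_self _))
    have hlt : q < p :=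
      lt_of_le_of_ne hqp fun hqp => hd q (by simpa using ⟨hq, hqi⟩) (hqp ▸ hxd)
    calc (i + 1 : ℕ∞) ≤ q.height + 1 := by gcongr; exact hI.trans (height_mono hq.le)
      _ ≤ p.height := height_add_one_le_of_lt_of_isPrime hlt
  · exact (Order.add_one_le_of_lt (not_le.mp hqi)).trans (height_mono hqp)

theorem Ideal.span_range_vecMul_le {ι R : Type*} [Fintype ι] [CommRing R] (β : ι → R)
    (M : Matrix ι ι R) : span (range (β ᵥ* M)) ≤ span (range β) :=
  span_le.mpr <| range_subset_iff.mpr fun _ =>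
    Submodule.sum_mem _ fun i _ => mul_mem_right _ _ (subset_span (mem_range_self i))

theorem Ideal.span_range_vecMul_specialLinearGroup {ι R : Type*} [Fintype ι] [DecidableEq ι]
    [CommRing R] (β : ι → R) (τ : SpecialLinearGroup ι R) :
    span (range (β ᵥ* (τ : Matrix ι ι R))) = span (range β) := by
  refine le_antisymm (span_range_vecMul_le β _) ?_
  have hβ : (β ᵥ* (τ : Matrix ι ι R)) ᵥ* (τ : Matrix ι ι R).adjugate = β := by
    simp [vecMul_vecMul, mul_adjugate]
  conv_lhs => rw [← hβ]
  exact span_range_vecMul_le _ _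

theorem Matrix.SpecialLinearGroup.exists_vecMul_eq_add_single {ι R : Type*} [Fintype ι]
    [DecidableEq ι] [CommRing R] (β : ι → R) (k : ι) {d : R}
    (hd : d ∈ span (range (Function.update β k 0))) :
    ∃ τ : SpecialLinearGroup ι R, β ᵥ* (τ : Matrix ι ι R) = β + Pi.single k d := by
  obtain ⟨c, hc⟩ := mem_span_range_iff_exists_fun.mp hd
  set t := Function.update c k 0
  have hβt : β ⬝ᵥ t = d := by
    rw [← hc]
    refine Finset.sum_congr rfl fun j _ => ?_
    by_cases hj : j = k
    · subst hj; simp [t]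
    · simp [t, hj, mul_comm]
  refine ⟨⟨1 + replicateCol Unit t * replicateRow Unit (Pi.single k (1 : R)), ?_⟩, ?_⟩
  · rw [det_one_add_replicateCol_mul_replicateRow]
    simp [t]
  · show β ᵥ* (1 + _) = _
    rw [vecMul_add, vecMul_one, ← vecMul_vecMul]
    congr 1
    funext j
    simp [vecMul, dotProduct, ← hβt, Pi.single_apply, replicateRow, replicateCol]

theorem IsLocalization.comap_sup_span_singleton_le_of_mem_minimalPrimes {R : Type*} [CommRing R]
    [Algebra A R] (M : Submonoid A) [IsLocalization M R] {S : Ideal R} {q : Ideal A}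
    (hq : q ∈ (S.comap (algebraMap A R)).minimalPrimes) {x : A} (hx : x ∈ q) :
    (S ⊔ span {algebraMap A R x}).comap (algebraMap A R) ≤ q := by
  rw [IsLocalization.minimalPrimes_comap M R] at hq
  obtain ⟨Q, hQ, rfl⟩ := hq
  exact comap_mono (sup_le hQ.le (span_singleton_le_iff_mem _ |>.mpr hx))

variable {ι R : Type*} [Fintype ι] [DecidableEq ι] [CommRing R] [Algebra A R]

theorem exists_vecMul_eq_and_card_insert_le_height [IsNoetherianRing A] (M : Submonoid A)
    [IsLocalization M R] {J : Ideal A} {b : ι → A} (hb : ∀ i, b i ∈ J)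
    (hgen : J.map (algebraMap A R) = span (range (algebraMap A R ∘ b)))
    {s : Finset ι} {k : ι} (hk : k ∉ s) (hsJ : (s.card : ℕ∞) < J.height)
    (hs : (s.card : ℕ∞) ≤ (span (b '' s)).height) :
    ∃ (τ : SpecialLinearGroup ι R) (b' : ι → A), (∀ i, b' i ∈ J) ∧
      (algebraMap A R ∘ b) ᵥ* (τ : Matrix ι ι R) = algebraMap A R ∘ b' ∧
      ((insert k s).card : ℕ∞) ≤ (span (b' '' ↑(insert k s))).height := by
  set φ := algebraMap A R
  set S := span (range (Function.update (φ ∘ b) k 0))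
  have hbS : ∀ j ≠ k, φ (b j) ∈ S := fun j hjk => by
    simpa [hjk] using subset_span (s := range (Function.update (φ ∘ b) k 0)) ⟨j, rfl⟩
  have hIS : span (b '' s) ≤ S.comap φ :=
    span_le.mpr <| image_subset_iff.mpr fun j hj => hbS j (ne_of_mem_of_not_mem hj hk)
  have hJS : span (range (φ ∘ b)) ≤ S ⊔ span {φ (b k)} :=
    span_le.mpr <| range_subset_iff.mpr fun j => by
      by_cases hjk : j = k
      · exact hjk ▸ mem_sup_right (mem_span_singleton_self _)
      · exact mem_sup_left (hbS j hjk)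
  have havoid : ∀ q ∈ (span (b '' s)).minimalPrimes, q.height ≤ s.card → b k ∈ q →
      ¬ J ⊓ S.comap φ ≤ q := by
    intro q hq hqs hbk hJSq
    have hJq : ¬ J ≤ q := fun hJq => (hsJ.trans_le (height_mono hJq)).not_ge hqs
    have hSq : S.comap φ ≤ q := ((hq.isPrime.inf_le).mp hJSq).resolve_left hJq
    refine hJq ?_
    calc J ≤ (J.map φ).comap φ := le_comap_map
      _ ≤ (S ⊔ span {φ (b k)}).comap φ := comap_mono (hgen ▸ hJS)
      _ ≤ q := IsLocalization.comap_sup_span_singleton_le_of_mem_minimalPrimes M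
        (mem_minimalPrimes_of_le_of_le hq hIS hSq) hbk
  obtain ⟨d, ⟨hdJ, hdS⟩, hd⟩ := exists_mem_le_height_sup_span_add hs havoid
  obtain ⟨τ, hτ⟩ := SpecialLinearGroup.exists_vecMul_eq_add_single (φ ∘ b) k hdS
  refine ⟨τ, b + Pi.single k d, fun i => ?_, ?_, ?_⟩
  · rcases eq_or_ne i k with rfl | hik
    · simpa using J.add_mem (hb i) hdJ
    · simpa [hik] using hb i
  · rw [hτ]
    funext j
    rcases eq_or_ne j k with rfl | hjk <;> simp [*]
  · have himage : (b + Pi.single k d) '' s = b '' s :=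
      image_congr fun j hj => by simp [ne_of_mem_of_not_mem hj hk]
    rw [Finset.card_insert_of_notMem hk, Finset.coe_insert, image_insert_eq, himage, span_insert,
      sup_comm]
    simpa using hd

theorem exists_vecMul_eq_and_card_le_height [IsNoetherianRing A] (M : Submonoid A)
    [IsLocalization M R] {J : Ideal A} (hJ : (Fintype.card ι : ℕ∞) ≤ J.height) {a : ι → A}
    (ha : ∀ i, a i ∈ J) (hgen : J.map (algebraMap A R) = span (range (algebraMap A R ∘ a)))
    (s : Finset ι) :
    ∃ (σ : SpecialLinearGroup ι R) (b : ι → A), (∀ i, b i ∈ J) ∧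
      (algebraMap A R ∘ a) ᵥ* (σ : Matrix ι ι R) = algebraMap A R ∘ b ∧
      (s.card : ℕ∞) ≤ (span (b '' s)).height := by
  induction s using Finset.induction_on with
  | empty => exact ⟨1, a, ha, vecMul_one _, by simp⟩
  | insert k s hk ih =>
    obtain ⟨σ, b, hb, hσ, hs⟩ := ih
    have hsJ : (s.card : ℕ∞) < J.height := by
      refine lt_of_lt_of_le ?_ hJ
      exact_mod_cast Finset.card_lt_univ_of_notMem hk
    have hgen' : J.map (algebraMap A R) = span (range (algebraMap A R ∘ b)) := by
      rw [hgen, ← hσ, span_range_vecMul_specialLinearGroup]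
    obtain ⟨τ, b', hb', hτ, hs'⟩ :=
      exists_vecMul_eq_and_card_insert_le_height M hb hgen' hk hsJ hs
    refine ⟨σ * τ, b', hb', ?_, hs'⟩
    rw [← hτ, ← hσ, vecMul_vecMul]
    rfl

end

theorem sln_move_generators_general {A : Type*} [CommRing A] [IsNoetherianRing A]
    (n : ℕ) (J : Ideal A) (hJ : idealHeight J = n)
    (f : A)
    (a : Fin n → A) (ha : ∀ i, a i ∈ J)
    (hgen : J.map (algebraMap A (Localization.Away f)) =
      Ideal.span (Set.range fun i => algebraMap A (Localization.Away f) (a i))) :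
    ∃ (σ : Matrix.SpecialLinearGroup (Fin n) (Localization.Away f)) (b : Fin n → A),
      (∀ i, b i ∈ J) ∧
      Matrix.vecMul (fun i => algebraMap A (Localization.Away f) (a i)) σ.1 =
        (fun i => algebraMap A (Localization.Away f) (b i)) ∧
      idealHeight (Ideal.span (Set.range b)) = n := by
  rw [idealHeight_eq_height] at hJ
  obtain ⟨σ, b, hb, hσ, hheight⟩ :=
    exists_vecMul_eq_and_card_le_height (Submonoid.powers f) (by simp [hJ]) ha hgen Finset.univ
  refine ⟨σ, b, hb, hσ, (idealHeight_eq_height _).trans (le_antisymm ?_ ?_)⟩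
  · exact hJ ▸ height_mono (span_le.mpr (range_subset_iff.mpr hb))
  · simpa using hheight

/-- If `J_f` is a proper ideal of `A_f` generated by `a₁,…,aₙ ∈ J`, then there is
`σ ∈ SLₙ(A_f)` transforming `(a₁,…,aₙ)` into `(b₁,…,bₙ)` with `bᵢ ∈ J` and
the ideal of `A` generated by the `bᵢ` of height `n`. -/
theorem sln_move_generators {A : Type*} [CommRing A] [IsNoetherianRing A]
    (n : ℕ) (J : Ideal A) (hJ : idealHeight J = n)
    (f : A) (hf : f ≠ 0)
    (hproper : J.map (algebraMap A (Localization.Away f)) ≠ ⊤)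
    (a : Fin n → A) (ha : ∀ i, a i ∈ J)
    (hgen : J.map (algebraMap A (Localization.Away f)) =
      Ideal.span (Set.range fun i => algebraMap A (Localization.Away f) (a i))) :
    ∃ (σ : Matrix.SpecialLinearGroup (Fin n) (Localization.Away f)) (b : Fin n → A),
      (∀ i, b i ∈ J) ∧
      Matrix.vecMul (fun i => algebraMap A (Localization.Away f) (a i)) σ.1 =
        (fun i => algebraMap A (Localization.Away f) (b i)) ∧
      idealHeight (Ideal.span (Set.range b)) = n :=
  sln_move_generators_general n J hJ f a ha hgen
end
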